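/- arXiv:0708.4076 — 3 statements merged into one kernel-verified Lean document; each statement's English description precedes it below -/
import Mathlib

section
/- Let E, F be Banach spaces, F^{uu} : E → E, F^{su} : F → E, F^{us} : E → F, F^{ss} : F → F bounded linear maps with F^{uu} invertible, ‖(F^{uu})⁻¹‖ ≤ λ₂, ‖F^{su}‖ ≤ ε, ‖F^{us}‖ + ‖F^{ss}‖ ≤ λ₂. For g : E → F with ‖g‖ ≤ r, set φ^u_g = F^{uu} + F^{su}g and φ^s_g = F^{us} + F^{ss}g, and define the graph transform Γ(g) = φ^s_g (φ^u_g)⁻¹ (which is well defined when rε < λ₂⁻¹). If moreover λ₃ ∈ (0,1) satisfies rε ≤ λ₂⁻¹ - λ₃⁻¹, then ‖Γ(g)‖ ≤ λ₂ λ₃ r ≤ r. -/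
theorem stmt2 {E F : Type*} [NormedAddCommGroup E] [NormedSpace ℝ E] [CompleteSpace E]
    [NormedAddCommGroup F] [NormedSpace ℝ F] [CompleteSpace F]
    (Fuu : E ≃L[ℝ] E) (Fsu : F →L[ℝ] E) (Fus : E →L[ℝ] F) (Fss : F →L[ℝ] F)
    (g : E →L[ℝ] F)
    (lam₂ lam₃ ε r : ℝ) (hlam₂ : 0 < lam₂) (hlam₂₃ : lam₂ < lam₃) (hlam₃ : lam₃ < 1)
    (hε : 0 < ε) (hr : 1 ≤ r)
    (hFuu : ‖(Fuu.symm : E →L[ℝ] E)‖ ≤ lam₂) (hFsu : ‖Fsu‖ ≤ ε)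
    (hFss : ‖Fus‖ + ‖Fss‖ ≤ lam₂)
    (hg : ‖g‖ ≤ r) (hre : r * ε ≤ lam₂⁻¹ - lam₃⁻¹) :
    ∀ φu : E ≃L[ℝ] E, (φu : E →L[ℝ] E) = (Fuu : E →L[ℝ] E) + Fsu.comp g →
      ‖(Fus + Fss.comp g).comp (φu.symm : E →L[ℝ] E)‖ ≤ lam₂ * lam₃ * r ∧
        lam₂ * lam₃ * r ≤ r := by
  intro φu hφu
  have h3 : (0:ℝ) < lam₃ := hlam₂.trans hlam₂₃
  have hinv2 : lam₂ * lam₂⁻¹ = 1 := mul_inv_cancel₀ hlam₂.ne'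
  have hinv3 : lam₃ * lam₃⁻¹ = 1 := mul_inv_cancel₀ h3.ne'
  -- ‖φu.symm‖ ≤ lam₃
  have hsymm : ‖(φu.symm : E →L[ℝ] E)‖ ≤ lam₃ := by
    apply ContinuousLinearMap.opNorm_le_bound _ h3.le
    intro x
    set y := φu.symm x with hy
    have hx : Fuu y + Fsu (g y) = x := by
      have h := φu.apply_symm_apply x
      calc Fuu y + Fsu (g y)
          = ((Fuu : E →L[ℝ] E) + Fsu.comp g) y := by simp
        _ = (φu : E →L[ℝ] E) y := by rw [hφu]
        _ = x := h
    have hyeq : y = Fuu.symm (x - Fsu (g y)) := by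
      have : Fuu y = x - Fsu (g y) := by
        rw [← hx]; abel
      rw [← this, Fuu.symm_apply_apply]
    have h1 : ‖y‖ ≤ lam₂ * (‖x‖ + ε * (r * ‖y‖)) := by
      calc ‖y‖ = ‖Fuu.symm (x - Fsu (g y))‖ := by rw [← hyeq]
        _ ≤ ‖(Fuu.symm : E →L[ℝ] E)‖ * ‖x - Fsu (g y)‖ :=
            (Fuu.symm : E →L[ℝ] E).le_opNorm _
        _ ≤ lam₂ * (‖x‖ + ε * (r * ‖y‖)) := by
            apply mul_le_mul hFuu _ (norm_nonneg _) hlam₂.le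
            calc ‖x - Fsu (g y)‖ ≤ ‖x‖ + ‖Fsu (g y)‖ := norm_sub_le _ _
              _ ≤ ‖x‖ + ε * (r * ‖y‖) := by
                  gcongr
                  calc ‖Fsu (g y)‖ ≤ ‖Fsu‖ * ‖g y‖ := Fsu.le_opNorm _
                    _ ≤ ε * (r * ‖y‖) := by
                        apply mul_le_mul hFsu _ (norm_nonneg _) hε.le
                        calc ‖g y‖ ≤ ‖g‖ * ‖y‖ := g.le_opNorm _
                          _ ≤ r * ‖y‖ := by gcongr
    -- algebra: lam₂*ε*r ≤ 1 - lam₂/lam₃, hence ‖y‖ ≤ lam₃ * ‖x‖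
    have h2 : lam₂ * (r * ε) ≤ 1 - lam₂ * lam₃⁻¹ := by
      have := mul_le_mul_of_nonneg_left hre hlam₂.le
      nlinarith
    have hyn : (0:ℝ) ≤ ‖y‖ := norm_nonneg _
    have hxn : (0:ℝ) ≤ ‖x‖ := norm_nonneg _
    -- ‖y‖ * (lam₂/lam₃) ≤ lam₂ ‖x‖
    have h4 : ‖y‖ * (lam₂ * lam₃⁻¹) ≤ lam₂ * ‖x‖ := by nlinarith
    have hi3 : (0:ℝ) < lam₃⁻¹ := inv_pos.mpr h3
    have hcoe : (φu.symm : E →L[ℝ] E) x = y := rfl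
    rw [hcoe]
    have h5 : ‖y‖ * lam₂ ≤ lam₂ * lam₃ * ‖x‖ := by
      have h6 := mul_le_mul_of_nonneg_right h4 h3.le
      have e : ‖y‖ * lam₂ = ‖y‖ * (lam₂ * lam₃⁻¹) * lam₃ := by
        field_simp
      rw [e]
      exact h6.trans_eq (by ring)
    nlinarith
  have hA : ‖Fus + Fss.comp g‖ ≤ lam₂ * r := by
    calc ‖Fus + Fss.comp g‖ ≤ ‖Fus‖ + ‖Fss.comp g‖ := norm_add_le _ _
      _ ≤ ‖Fus‖ + ‖Fss‖ * ‖g‖ := by gcongr; exact Fss.opNorm_comp_le g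
      _ ≤ ‖Fus‖ + ‖Fss‖ * r := by gcongr
      _ ≤ (‖Fus‖ + ‖Fss‖) * r := by nlinarith [norm_nonneg Fus, norm_nonneg Fss]
      _ ≤ lam₂ * r := by nlinarith
  constructor
  · calc ‖(Fus + Fss.comp g).comp (φu.symm : E →L[ℝ] E)‖
        ≤ ‖Fus + Fss.comp g‖ * ‖(φu.symm : E →L[ℝ] E)‖ :=
          ContinuousLinearMap.opNorm_comp_le _ _
      _ ≤ (lam₂ * r) * lam₃ := by
          apply mul_le_mul hA hsymm (norm_nonneg _)
          positivity
      _ = lam₂ * lam₃ * r := by ring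
  · have hlt : lam₂ * lam₃ < 1 := by
      nlinarith [mul_lt_mul_of_pos_right hlam₂₃ h3]
    nlinarith
end

section
/- With the setup of the graph transform (E, F Banach spaces, F^{uu}, F^{su}, F^{us}, F^{ss} bounded linear maps, ‖(F^{uu})⁻¹‖ ≤ λ₂, ‖F^{su}‖ ≤ ε, ‖F^{us}‖ + ‖F^{ss}‖ ≤ λ₂, rε ≤ λ₂⁻¹ - λ₃⁻¹ with 0 < λ₂ < λ₃ < 1, r ≥ 1), the graph transform Γ is a λ₃²-contraction on the ball of radius r: for any g₁, g₂ : E → F with ‖g₁‖, ‖g₂‖ ≤ r, one has ‖Γ(g₁) - Γ(g₂)‖ ≤ λ₃² ‖g₁ - g₂‖. -/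
set_option maxHeartbeats 1000000 in
theorem stmt3 {E F : Type*} [NormedAddCommGroup E] [NormedSpace ℝ E] [CompleteSpace E]
    [NormedAddCommGroup F] [NormedSpace ℝ F] [CompleteSpace F]
    (Fuu : E ≃L[ℝ] E) (Fsu : F →L[ℝ] E) (Fus : E →L[ℝ] F) (Fss : F →L[ℝ] F)
    (g₁ g₂ : E →L[ℝ] F)
    (lam₂ lam₃ ε r : ℝ) (hlam₂ : 0 < lam₂) (hlam₂₃ : lam₂ < lam₃) (hlam₃ : lam₃ < 1)
    (hε : 0 < ε) (hr : 1 ≤ r)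
    (hFuu : ‖(Fuu.symm : E →L[ℝ] E)‖ ≤ lam₂) (hFsu : ‖Fsu‖ ≤ ε)
    (hFss : ‖Fus‖ + ‖Fss‖ ≤ lam₂)
    (hg₁ : ‖g₁‖ ≤ r) (hg₂ : ‖g₂‖ ≤ r) (hre : r * ε ≤ lam₂⁻¹ - lam₃⁻¹)
    (φu₁ φu₂ : E ≃L[ℝ] E)
    (hφu₁ : (φu₁ : E →L[ℝ] E) = (Fuu : E →L[ℝ] E) + Fsu.comp g₁)
    (hφu₂ : (φu₂ : E →L[ℝ] E) = (Fuu : E →L[ℝ] E) + Fsu.comp g₂) :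
    ‖(Fus + Fss.comp g₁).comp (φu₁.symm : E →L[ℝ] E) -
      (Fus + Fss.comp g₂).comp (φu₂.symm : E →L[ℝ] E)‖ ≤ lam₃ ^ 2 * ‖g₁ - g₂‖ := by
  have hr0 : (0:ℝ) < r := lt_of_lt_of_le one_pos hr
  have hlam₃0 : 0 < lam₃ := hlam₂.trans hlam₂₃
  -- key bound on the inverses
  have key : ∀ (φ : E ≃L[ℝ] E) (g : E →L[ℝ] F), ‖g‖ ≤ r →
      (φ : E →L[ℝ] E) = (Fuu : E →L[ℝ] E) + Fsu.comp g →
      ‖(φ.symm : E →L[ℝ] E)‖ ≤ lam₃ := by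
    intro φ g hg hφ
    apply ContinuousLinearMap.opNorm_le_bound _ hlam₃0.le
    intro x
    set y := (φ.symm : E →L[ℝ] E) x with hy
    have hx : Fuu y + Fsu (g y) = x := by
      have h := φ.apply_symm_apply x
      have h2 : (φ : E →L[ℝ] E) y = x := h
      rw [hφ] at h2
      simpa using h2
    -- lower bound on ‖Fuu y‖
    have hl : lam₂⁻¹ * ‖y‖ ≤ ‖Fuu y‖ := by
      rw [inv_mul_le_iff₀ hlam₂]
      calc ‖y‖ = ‖(Fuu.symm : E →L[ℝ] E) (Fuu y)‖ := by simp
        _ ≤ ‖(Fuu.symm : E →L[ℝ] E)‖ * ‖Fuu y‖ := ContinuousLinearMap.le_opNorm _ _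
        _ ≤ lam₂ * ‖Fuu y‖ := by gcongr
    have hs : ‖Fsu (g y)‖ ≤ ε * (r * ‖y‖) := by
      calc ‖Fsu (g y)‖ ≤ ‖Fsu‖ * ‖g y‖ := ContinuousLinearMap.le_opNorm _ _
        _ ≤ ε * (r * ‖y‖) := by
            have : ‖g y‖ ≤ r * ‖y‖ :=
              le_trans (ContinuousLinearMap.le_opNorm _ _) (by gcongr)
            exact mul_le_mul hFsu this (norm_nonneg _) hε.le
    have hxl : ‖Fuu y‖ - ‖Fsu (g y)‖ ≤ ‖x‖ := by
      have : ‖Fuu y‖ ≤ ‖x‖ + ‖Fsu (g y)‖ := by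
        have hxy : (Fuu y : E) = x - Fsu (g y) := by rw [← hx]; abel
        rw [hxy]; exact norm_sub_le _ _
      linarith
    have hinv : lam₃⁻¹ * ‖y‖ ≤ ‖x‖ := by
      have h1 : lam₃⁻¹ ≤ lam₂⁻¹ - r * ε := by linarith
      have h2 : lam₃⁻¹ * ‖y‖ ≤ (lam₂⁻¹ - r * ε) * ‖y‖ := by
        apply mul_le_mul_of_nonneg_right h1 (norm_nonneg _)
      calc lam₃⁻¹ * ‖y‖ ≤ lam₂⁻¹ * ‖y‖ - r * ε * ‖y‖ := by nlinarith
        _ ≤ ‖Fuu y‖ - ‖Fsu (g y)‖ := by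
            have : ε * (r * ‖y‖) = r * ε * ‖y‖ := by ring
            linarith [hs, hl]
        _ ≤ ‖x‖ := hxl
    calc ‖y‖ = lam₃ * (lam₃⁻¹ * ‖y‖) := by field_simp
      _ ≤ lam₃ * ‖x‖ := by gcongr
  have hB₁ : ‖(φu₁.symm : E →L[ℝ] E)‖ ≤ lam₃ := key φu₁ g₁ hg₁ hφu₁
  have hB₂ : ‖(φu₂.symm : E →L[ℝ] E)‖ ≤ lam₃ := key φu₂ g₂ hg₂ hφu₂
  set B₁ := (φu₁.symm : E →L[ℝ] E)
  set B₂ := (φu₂.symm : E →L[ℝ] E)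
  set A₁ := Fus + Fss.comp g₁
  set A₂ := Fus + Fss.comp g₂
  -- difference of inverses
  have hBdiff : B₁ - B₂ = B₁.comp ((Fsu.comp (g₂ - g₁)).comp B₂) := by
    have hφdiff : (φu₂ : E →L[ℝ] E) - (φu₁ : E →L[ℝ] E) = Fsu.comp (g₂ - g₁) := by
      rw [hφu₁, hφu₂]; ext z; simp
    ext x
    have e1 : (φu₂ : E →L[ℝ] E) (B₂ x) = x := φu₂.apply_symm_apply x
    have e2 : B₁ ((φu₁ : E →L[ℝ] E) (B₂ x)) = B₂ x := φu₁.symm_apply_apply _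
    calc (B₁ - B₂) x = B₁ (((φu₂ : E →L[ℝ] E) - (φu₁ : E →L[ℝ] E)) (B₂ x)) := by
          simp only [ContinuousLinearMap.sub_apply, map_sub, e1, e2]
      _ = (B₁.comp ((Fsu.comp (g₂ - g₁)).comp B₂)) x := by rw [hφdiff]; rfl
  have hAdiff : A₁ - A₂ = Fss.comp (g₁ - g₂) := by
    ext z; simp [A₁, A₂]
  have hsplit : A₁.comp B₁ - A₂.comp B₂ = (A₁ - A₂).comp B₁ + A₂.comp (B₁ - B₂) := by
    ext x; simp [ContinuousLinearMap.sub_apply, ContinuousLinearMap.add_apply, map_sub]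
  have hFss' : ‖Fss‖ ≤ lam₂ := le_trans (by linarith [norm_nonneg Fus]) (le_refl lam₂)
  have hA₂ : ‖A₂‖ ≤ lam₂ * r := by
    calc ‖A₂‖ ≤ ‖Fus‖ + ‖Fss.comp g₂‖ := norm_add_le _ _
      _ ≤ ‖Fus‖ + ‖Fss‖ * ‖g₂‖ := by gcongr; exact ContinuousLinearMap.opNorm_comp_le _ _
      _ ≤ ‖Fus‖ * r + ‖Fss‖ * r := by
          have : ‖Fus‖ ≤ ‖Fus‖ * r := le_mul_of_one_le_right (norm_nonneg _) hr
          nlinarith [norm_nonneg Fss]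
      _ ≤ lam₂ * r := by nlinarith
  have hBd : ‖B₁ - B₂‖ ≤ lam₃ * (ε * ‖g₁ - g₂‖) * lam₃ := by
    rw [hBdiff]
    calc ‖B₁.comp ((Fsu.comp (g₂ - g₁)).comp B₂)‖
        ≤ ‖B₁‖ * ‖(Fsu.comp (g₂ - g₁)).comp B₂‖ := ContinuousLinearMap.opNorm_comp_le _ _
      _ ≤ ‖B₁‖ * (‖Fsu.comp (g₂ - g₁)‖ * ‖B₂‖) := by
          gcongr; exact ContinuousLinearMap.opNorm_comp_le _ _
      _ ≤ lam₃ * ((ε * ‖g₁ - g₂‖) * lam₃) := by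
          have h1 : ‖Fsu.comp (g₂ - g₁)‖ ≤ ε * ‖g₁ - g₂‖ := by
            calc ‖Fsu.comp (g₂ - g₁)‖ ≤ ‖Fsu‖ * ‖g₂ - g₁‖ :=
                  ContinuousLinearMap.opNorm_comp_le _ _
              _ = ‖Fsu‖ * ‖g₁ - g₂‖ := by rw [norm_sub_rev]
              _ ≤ ε * ‖g₁ - g₂‖ := by gcongr
          gcongr
      _ = lam₃ * (ε * ‖g₁ - g₂‖) * lam₃ := by ring
  have hAd : ‖A₁ - A₂‖ ≤ lam₂ * ‖g₁ - g₂‖ := by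
    rw [hAdiff]
    calc ‖Fss.comp (g₁ - g₂)‖ ≤ ‖Fss‖ * ‖g₁ - g₂‖ := ContinuousLinearMap.opNorm_comp_le _ _
      _ ≤ lam₂ * ‖g₁ - g₂‖ := mul_le_mul_of_nonneg_right hFss' (norm_nonneg _)
  have hmain : ‖A₁.comp B₁ - A₂.comp B₂‖ ≤
      lam₂ * ‖g₁ - g₂‖ * lam₃ + lam₂ * r * (lam₃ * (ε * ‖g₁ - g₂‖) * lam₃) := by
    rw [hsplit]
    calc ‖(A₁ - A₂).comp B₁ + A₂.comp (B₁ - B₂)‖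
        ≤ ‖(A₁ - A₂).comp B₁‖ + ‖A₂.comp (B₁ - B₂)‖ := norm_add_le _ _
      _ ≤ ‖A₁ - A₂‖ * ‖B₁‖ + ‖A₂‖ * ‖B₁ - B₂‖ := by
          gcongr <;> exact ContinuousLinearMap.opNorm_comp_le _ _
      _ ≤ lam₂ * ‖g₁ - g₂‖ * lam₃ + lam₂ * r * (lam₃ * (ε * ‖g₁ - g₂‖) * lam₃) := by
          have t1 : ‖A₁ - A₂‖ * ‖B₁‖ ≤ lam₂ * ‖g₁ - g₂‖ * lam₃ :=
            mul_le_mul hAd hB₁ (norm_nonneg _) (by positivity)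
          have t2 : ‖A₂‖ * ‖B₁ - B₂‖ ≤ lam₂ * r * (lam₃ * (ε * ‖g₁ - g₂‖) * lam₃) :=
            mul_le_mul hA₂ hBd (norm_nonneg _) (by positivity)
          exact add_le_add t1 t2
  refine le_trans hmain ?_
  -- arithmetic: lam₂*lam₃ + lam₂*r*ε*lam₃^2 ≤ lam₃^2
  have hd : ‖g₁ - g₂‖ ≥ 0 := norm_nonneg _
  have h1 : lam₂ * lam₂⁻¹ = 1 := mul_inv_cancel₀ hlam₂.ne'
  have h2 : lam₃ * lam₃⁻¹ = 1 := mul_inv_cancel₀ hlam₃0.ne'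
  have hcoef : lam₂ * lam₃ + lam₂ * r * ε * lam₃ ^ 2 ≤ lam₃ ^ 2 := by
    have h3 : lam₂ * (r * ε) ≤ lam₂ * (lam₂⁻¹ - lam₃⁻¹) := by
      apply mul_le_mul_of_nonneg_left hre hlam₂.le
    have h4 : lam₂ * (lam₂⁻¹ - lam₃⁻¹) = 1 - lam₂ * lam₃⁻¹ := by
      rw [mul_sub, h1]
    nlinarith [sq_nonneg lam₃, mul_pos hlam₂ hlam₃0]
  nlinarith [sq_nonneg lam₃, mul_nonneg (mul_nonneg hlam₂.le hr0.le) hd]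
end

section
/- Let X be a Banach space, A : X → X a bounded linear operator, J a bounded linear right inverse of 1 - A, r > 0, and Ψ : B(r) → X a map (B(r) the closed ball of radius r centered at 0). Suppose ‖Ψ(0)‖ ≤ r/(2‖J‖) and Ψ - A is Lipschitz on B(r) with constant 1/(2‖J‖). Then the map R(x) = J(Ψ(x) - A(x)) maps B(r) into B(r) and is a (1/2)-contraction, hence has a unique fixed point c ∈ B(r), and this fixed point satisfies Ψ(c) = c. -/
theorem stmt8 {X : Type*} [NormedAddCommGroup X] [NormedSpace ℝ X] [CompleteSpace X]
    (A J : X →L[ℝ] X) (hJ : ∀ x : X, J x - A (J x) = x) (hJpos : 0 < ‖J‖)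
    (r : ℝ) (hr : 0 < r) (Ψ : X → X)
    (hΨ0 : ‖Ψ 0‖ ≤ r / (2 * ‖J‖))
    (hLip : ∀ x ∈ Metric.closedBall (0 : X) r, ∀ y ∈ Metric.closedBall (0 : X) r,
      ‖(Ψ x - A x) - (Ψ y - A y)‖ ≤ (1 / (2 * ‖J‖)) * ‖x - y‖) :
    (∀ x ∈ Metric.closedBall (0 : X) r, J (Ψ x - A x) ∈ Metric.closedBall (0 : X) r) ∧
    (∀ x ∈ Metric.closedBall (0 : X) r, ∀ y ∈ Metric.closedBall (0 : X) r,
      ‖J (Ψ x - A x) - J (Ψ y - A y)‖ ≤ (1 / 2) * ‖x - y‖) ∧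
    (∃! c : X, c ∈ Metric.closedBall (0 : X) r ∧ J (Ψ c - A c) = c) ∧
    (∀ c ∈ Metric.closedBall (0 : X) r, J (Ψ c - A c) = c → Ψ c = c) := by
  have h0 : (0 : X) ∈ Metric.closedBall (0 : X) r := by
    simp [Metric.mem_closedBall, le_of_lt hr]
  have hmap : ∀ x ∈ Metric.closedBall (0 : X) r,
      J (Ψ x - A x) ∈ Metric.closedBall (0 : X) r := by
    intro x hx
    have hx' : ‖x‖ ≤ r := by simpa [Metric.mem_closedBall, dist_eq_norm] using hx
    have h1 : ‖Ψ x - A x‖ ≤ (1 / (2 * ‖J‖)) * ‖x‖ + r / (2 * ‖J‖) := by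
      have := hLip x hx 0 h0
      have hA0 : A (0 : X) = 0 := map_zero A
      calc ‖Ψ x - A x‖ = ‖((Ψ x - A x) - (Ψ 0 - A 0)) + (Ψ 0 - A 0)‖ := by rw [sub_add_cancel]
        _ ≤ ‖(Ψ x - A x) - (Ψ 0 - A 0)‖ + ‖Ψ 0 - A 0‖ := norm_add_le _ _
        _ ≤ (1 / (2 * ‖J‖)) * ‖x - 0‖ + r / (2 * ‖J‖) := by
            gcongr
            simpa [hA0] using hΨ0
        _ = (1 / (2 * ‖J‖)) * ‖x‖ + r / (2 * ‖J‖) := by simp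
    have h2 : ‖J (Ψ x - A x)‖ ≤ ‖J‖ * ((1 / (2 * ‖J‖)) * ‖x‖ + r / (2 * ‖J‖)) := by
      calc ‖J (Ψ x - A x)‖ ≤ ‖J‖ * ‖Ψ x - A x‖ := J.le_opNorm _
        _ ≤ _ := by gcongr
    have h3 : ‖J‖ * ((1 / (2 * ‖J‖)) * ‖x‖ + r / (2 * ‖J‖)) = ‖x‖ / 2 + r / 2 := by
      field_simp
    simp only [Metric.mem_closedBall, dist_eq_norm, sub_zero]
    rw [h3] at h2
    linarith
  have hcon : ∀ x ∈ Metric.closedBall (0 : X) r, ∀ y ∈ Metric.closedBall (0 : X) r,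
      ‖J (Ψ x - A x) - J (Ψ y - A y)‖ ≤ (1 / 2) * ‖x - y‖ := by
    intro x hx y hy
    calc ‖J (Ψ x - A x) - J (Ψ y - A y)‖ = ‖J ((Ψ x - A x) - (Ψ y - A y))‖ := by
          congr 1; simp [map_sub]
      _ ≤ ‖J‖ * ‖(Ψ x - A x) - (Ψ y - A y)‖ := J.le_opNorm _
      _ ≤ ‖J‖ * ((1 / (2 * ‖J‖)) * ‖x - y‖) := by gcongr; exact hLip x hx y hy
      _ = (1 / 2) * ‖x - y‖ := by field_simp
  refine ⟨hmap, hcon, ?_, ?_⟩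
  · -- fixed point on the subtype
    set s := Metric.closedBall (0 : X) r with hs
    haveI : Nonempty s := ⟨⟨0, h0⟩⟩
    have hclosed : IsClosed s := Metric.isClosed_closedBall
    haveI : CompleteSpace s := hclosed.completeSpace_coe
    set f : s → s := fun x => ⟨J (Ψ x.1 - A x.1), hmap x.1 x.2⟩ with hf
    have hfc : ContractingWith (1/2 : NNReal) f := by
      constructor
      · exact one_half_lt_one
      · apply LipschitzWith.of_dist_le_mul
        intro x y
        have := hcon x.1 x.2 y.1 y.2
        rw [Subtype.dist_eq, Subtype.dist_eq, dist_eq_norm, dist_eq_norm]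
        push_cast
        convert this using 2
    refine ⟨(hfc.fixedPoint f).1, ⟨(hfc.fixedPoint f).2, ?_⟩, ?_⟩
    · have := hfc.fixedPoint_isFixedPt
      simpa [hf, Function.IsFixedPt, Subtype.ext_iff] using this
    · rintro c ⟨hcs, hcfix⟩
      have : Function.IsFixedPt f ⟨c, hcs⟩ := Subtype.ext hcfix
      have h2 := hfc.fixedPoint_unique this
      simpa [Subtype.ext_iff] using h2
  · intro c _ hc
    have h1 := hJ (Ψ c - A c)
    rw [hc] at h1
    have : Ψ c - A c = c - A c := h1.symm
    exact (sub_left_inj.mp this)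
end
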